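/- Fix M > 0 and let Area(Δ_i) : ℝ^4_{>0} → ℝ be defined by Area(Δ_i)(r_i,r_j,r_k,r_h) = π − β_{ij,kh} − β_{ik,jh} − β_{ih,jk}, where β_{ij,kh} = arccos((2 − t_i^2 − t_j^2 + t_it_k + t_it_h + t_jt_k + t_jt_h)/(2√(λ_1λ_2))), with t_ν = tanh r_ν, λ_1 = t_it_j + t_it_k + t_jt_k + 1, λ_2 = t_it_j + t_it_h + t_jt_h + 1, and β_{ik,jh}, β_{ih,jk} given by the same formula with the roles of (j,k), respectively (j,h), interchanged. If 0 < r_ν ≤ M for all ν ∈ {i,j,k,h}, then Area(Δ_i)(r) ≥ π − 3·arccos((1 + tanh^2 M)/(1 + 3·tanh^2 M)), and this lower bound is strictly positive. Moreover, for any c ∈ (0, M), if in addition r_i < c, then Area(Δ_i)(r) > π − 3·arccos(1/2 + (1 − tanh^2 c)/(2(1 + tanh^2 M + 2·tanh c·tanh M))). -/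

import Mathlib

open Real

/-- The area of the vertex triangle `Δ_i`:
`Area(Δ_i) = π − β_{ij,kh} − β_{ik,jh} − β_{ih,jk}`, where each dihedral angle is given
by the arccos formula of Proposition 3.1 (equation (15)) with `t_ν = tanh r_ν`. -/
noncomputable def areaDelta (ri rj rk rh : ℝ) : ℝ :=
  π - arccos ((2 - tanh ri ^ 2 - tanh rj ^ 2 + tanh ri * tanh rk + tanh ri * tanh rh
        + tanh rj * tanh rk + tanh rj * tanh rh) /
      (2 * Real.sqrt ((tanh ri * tanh rj + tanh ri * tanh rk + tanh rj * tanh rk + 1) *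
        (tanh ri * tanh rj + tanh ri * tanh rh + tanh rj * tanh rh + 1))))
    - arccos ((2 - tanh ri ^ 2 - tanh rk ^ 2 + tanh ri * tanh rj + tanh ri * tanh rh
        + tanh rk * tanh rj + tanh rk * tanh rh) /
      (2 * Real.sqrt ((tanh ri * tanh rk + tanh ri * tanh rj + tanh rk * tanh rj + 1) *
        (tanh ri * tanh rk + tanh ri * tanh rh + tanh rk * tanh rh + 1))))
    - arccos ((2 - tanh ri ^ 2 - tanh rh ^ 2 + tanh ri * tanh rj + tanh ri * tanh rk
        + tanh rh * tanh rj + tanh rh * tanh rk) /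
      (2 * Real.sqrt ((tanh ri * tanh rh + tanh ri * tanh rj + tanh rh * tanh rj + 1) *
        (tanh ri * tanh rh + tanh ri * tanh rk + tanh rh * tanh rk + 1))))

set_option maxHeartbeats 2000000

lemma aux (n' n Pd P E s w uv : ℝ) (hs : 0 < s) (hw : 0 < w) (hP : 0 < P) (huv : 0 < uv)
    (hs2 : s^2 = P) (hkey : (2*P + E)*uv = -(2*n'*P - n*Pd)) :
    (2*P + E)/(2*P*w) = -(1/(uv*w/(2*s))) * ((n'*(2*s) - n*(2*(Pd/(2*s))))/(2*s)^2) := by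
  have hsne : s ≠ 0 := ne_of_gt hs
  have hwne : w ≠ 0 := ne_of_gt hw
  have hPne : P ≠ 0 := ne_of_gt hP
  have huvne : uv ≠ 0 := ne_of_gt huv
  field_simp
  linear_combination s^2*hkey + n*Pd*hs2


lemma aux2 (n Pd L1 L2 F s w uv : ℝ) (hs : 0 < s) (hw : 0 < w) (hL1 : 0 < L1) (hL2 : 0 < L2)
    (huv : 0 < uv) (hs2 : s^2 = L1*L2) (hkey : uv*(uv*F)*L2 = 2*uv*(L1*L2) - n*Pd) :
    -(uv*F)/(2*L1*w) = -(1/(uv*w/(2*s))) * ((uv*(2*s) - n*(2*(Pd/(2*s))))/(2*s)^2) := by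
  have hsne : s ≠ 0 := ne_of_gt hs
  have hwne : w ≠ 0 := ne_of_gt hw
  have hL1ne : L1 ≠ 0 := ne_of_gt hL1
  have hL2ne : L2 ≠ 0 := ne_of_gt hL2
  have huvne : uv ≠ 0 := ne_of_gt huv
  field_simp
  linear_combination (-L1)*hkey + (2*uv*L1 - uv^2*F)*hs2

noncomputable def bfun (u v p q : ℝ) : ℝ :=
  arccos ((2 - u^2 - v^2 + u*p + u*q + v*p + v*q) /
    (2 * Real.sqrt ((u*v + u*p + v*p + 1) * (u*v + u*q + v*q + 1))))

lemma bfun_deriv_fst (u v p q : ℝ) (hu0 : 0 < u) (hu1 : u < 1)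
    (hv0 : 0 < v) (hv1 : v < 1) (hp0 : 0 < p) (hp1 : p < 1) (hq0 : 0 < q) (hq1 : q < 1) :
    HasDerivAt (fun t => bfun t v p q)
      ((2*((u*v + u*p + v*p + 1)*(u*v + u*q + v*q + 1))
          + (1 - v^2)*((u*v + u*p + v*p + 1) + (u*v + u*q + v*q + 1) - (p - q)^2))
        / (2*((u*v + u*p + v*p + 1)*(u*v + u*q + v*q + 1))
            * √(4 - (u^2 + v^2 + p^2 + q^2) + 2*(u*v + u*p + u*q + v*p + v*q + p*q)))) u := by
  have hL1 : (0:ℝ) < u*v + u*p + v*p + 1 := by nlinarith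
  have hL2 : (0:ℝ) < u*v + u*q + v*q + 1 := by nlinarith
  have hPp : (0:ℝ) < (u*v + u*p + v*p + 1)*(u*v + u*q + v*q + 1) := mul_pos hL1 hL2
  have hWp : (0:ℝ) < 4 - (u^2 + v^2 + p^2 + q^2) + 2*(u*v + u*p + u*q + v*p + v*q + p*q) := by
    nlinarith
  have hsP : (0:ℝ) < √((u*v + u*p + v*p + 1)*(u*v + u*q + v*q + 1)) := Real.sqrt_pos.2 hPp
  have hsW : (0:ℝ) < √(4 - (u^2 + v^2 + p^2 + q^2) + 2*(u*v + u*p + u*q + v*p + v*q + p*q)) :=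
    Real.sqrt_pos.2 hWp
  have h1 : HasDerivAt (fun t : ℝ => t*v + t*p + v*p + 1) (v + p) u := by
    simpa using ((((hasDerivAt_id u).mul_const v).add
      ((hasDerivAt_id u).mul_const p)).add_const (v*p)).add_const 1
  have h2 : HasDerivAt (fun t : ℝ => t*v + t*q + v*q + 1) (v + q) u := by
    simpa using ((((hasDerivAt_id u).mul_const v).add
      ((hasDerivAt_id u).mul_const q)).add_const (v*q)).add_const 1
  have hProd := h1.mul h2
  have hsqrt := hProd.sqrt (ne_of_gt hPp)
  have hden := hsqrt.const_mul (2:ℝ)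
  have hn : HasDerivAt (fun t : ℝ => 2 - t^2 - v^2 + t*p + t*q + v*p + v*q)
      (p + q - 2*u) u := by
    have h := ((((((hasDerivAt_const u (2:ℝ)).sub (hasDerivAt_pow 2 u)).sub_const (v^2)).add
      ((hasDerivAt_id u).mul_const p)).add
      ((hasDerivAt_id u).mul_const q)).add_const (v*p)).add_const (v*q)
    refine h.congr_deriv (Eq.symm ?_)
    norm_num
    ring
  have hdenne : (2:ℝ) * √((u*v + u*p + v*p + 1)*(u*v + u*q + v*q + 1)) ≠ 0 := by positivity
  have hc := hn.div hden hdenne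
  set cu : ℝ := (2 - u^2 - v^2 + u*p + u*q + v*p + v*q) /
      (2 * √((u*v + u*p + v*p + 1) * (u*v + u*q + v*q + 1))) with hcu
  have hsq : 1 - cu^2 = ((u+v) * √(4 - (u^2 + v^2 + p^2 + q^2)
      + 2*(u*v + u*p + u*q + v*p + v*q + p*q)) /
      (2 * √((u*v + u*p + v*p + 1) * (u*v + u*q + v*q + 1))))^2 := by
    rw [hcu, div_pow, div_pow, mul_pow (u+v), Real.sq_sqrt hWp.le, mul_pow (2:ℝ),
      Real.sq_sqrt hPp.le]
    rw [eq_div_iff (by positivity), sub_mul, div_mul_cancel₀ _ (by positivity)]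
    ring
  have hne1 : cu ≠ -1 := by
    have : (0:ℝ) < cu := by
      rw [hcu]; apply div_pos (by nlinarith) (by positivity)
    linarith
  have hne2 : cu ≠ 1 := by
    have h0 : 0 < 1 - cu^2 := by
      rw [hsq]; positivity
    intro h; rw [h] at h0; norm_num at h0
  have harc := (Real.hasDerivAt_arccos hne1 hne2).comp u hc
  have hfun : (fun t => bfun t v p q) = arccos ∘ (fun t =>
      (2 - t^2 - v^2 + t*p + t*q + v*p + v*q) /
      (2 * √((t*v + t*p + v*p + 1) * (t*v + t*q + v*q + 1)))) := rfl
  rw [hfun]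
  refine harc.congr_deriv (Eq.symm ?_)
  rw [hsq, Real.sqrt_sq (by positivity)]
  exact aux _ _ _ _ _ _ _ _ hsP hsW hPp (by positivity) (Real.sq_sqrt hPp.le) (by ring)

lemma bfun_deriv_thd (u v p q : ℝ) (hu0 : 0 < u) (hu1 : u < 1)
    (hv0 : 0 < v) (hv1 : v < 1) (hp0 : 0 < p) (hp1 : p < 1) (hq0 : 0 < q) (hq1 : q < 1) :
    HasDerivAt (fun t => bfun u v t q)
      (-((u + v)*(u + v + p - q))
        / (2*(u*v + u*p + v*p + 1)
            * √(4 - (u^2 + v^2 + p^2 + q^2) + 2*(u*v + u*p + u*q + v*p + v*q + p*q)))) p := by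
  have hL1 : (0:ℝ) < u*v + u*p + v*p + 1 := by nlinarith
  have hL2 : (0:ℝ) < u*v + u*q + v*q + 1 := by nlinarith
  have hPp : (0:ℝ) < (u*v + u*p + v*p + 1)*(u*v + u*q + v*q + 1) := mul_pos hL1 hL2
  have hWp : (0:ℝ) < 4 - (u^2 + v^2 + p^2 + q^2) + 2*(u*v + u*p + u*q + v*p + v*q + p*q) := by
    nlinarith
  have hsP : (0:ℝ) < √((u*v + u*p + v*p + 1)*(u*v + u*q + v*q + 1)) := Real.sqrt_pos.2 hPp
  have hsW : (0:ℝ) < √(4 - (u^2 + v^2 + p^2 + q^2) + 2*(u*v + u*p + u*q + v*p + v*q + p*q)) :=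
    Real.sqrt_pos.2 hWp
  have h1 : HasDerivAt (fun t : ℝ => u*v + u*t + v*t + 1) (u + v) p := by
    simpa using (((hasDerivAt_const p (u*v)).add ((hasDerivAt_id p).const_mul u)).add
      ((hasDerivAt_id p).const_mul v)).add_const 1
  have hProd := h1.mul_const (u*v + u*q + v*q + 1)
  have hsqrt := hProd.sqrt (ne_of_gt (by
    simpa using hPp : (0:ℝ) < (u*v + u*p + v*p + 1)*(u*v + u*q + v*q + 1)))
  have hden := hsqrt.const_mul (2:ℝ)
  have hn : HasDerivAt (fun t : ℝ => 2 - u^2 - v^2 + u*t + u*q + v*t + v*q) (u + v) p := by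
    simpa using ((((hasDerivAt_const p (2 - u^2 - v^2)).add
      ((hasDerivAt_id p).const_mul u)).add_const (u*q)).add
      ((hasDerivAt_id p).const_mul v)).add_const (v*q)
  have hdenne : (2:ℝ) * √((u*v + u*p + v*p + 1)*(u*v + u*q + v*q + 1)) ≠ 0 := by positivity
  have hc := hn.div hden hdenne
  set cu : ℝ := (2 - u^2 - v^2 + u*p + u*q + v*p + v*q) /
      (2 * √((u*v + u*p + v*p + 1) * (u*v + u*q + v*q + 1))) with hcu
  have hsq : 1 - cu^2 = ((u+v) * √(4 - (u^2 + v^2 + p^2 + q^2)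
      + 2*(u*v + u*p + u*q + v*p + v*q + p*q)) /
      (2 * √((u*v + u*p + v*p + 1) * (u*v + u*q + v*q + 1))))^2 := by
    rw [hcu, div_pow, div_pow, mul_pow (u+v), Real.sq_sqrt hWp.le, mul_pow (2:ℝ),
      Real.sq_sqrt hPp.le]
    rw [eq_div_iff (by positivity), sub_mul, div_mul_cancel₀ _ (by positivity)]
    ring
  have hne1 : cu ≠ -1 := by
    have : (0:ℝ) < cu := by
      rw [hcu]; apply div_pos (by nlinarith) (by positivity)
    linarith
  have hne2 : cu ≠ 1 := by
    have h0 : 0 < 1 - cu^2 := by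
      rw [hsq]; positivity
    intro h; rw [h] at h0; norm_num at h0
  have harc := (Real.hasDerivAt_arccos hne1 hne2).comp p hc
  have hfun : (fun t => bfun u v t q) = arccos ∘ (fun t =>
      (2 - u^2 - v^2 + u*t + u*q + v*t + v*q) /
      (2 * √((u*v + u*t + v*t + 1) * (u*v + u*q + v*q + 1)))) := rfl
  rw [hfun]
  refine harc.congr_deriv (Eq.symm ?_)
  rw [hsq, Real.sqrt_sq (by positivity)]
  exact aux2 _ _ _ _ _ _ _ _ hsP hsW hL1 hL2 (by positivity) (Real.sq_sqrt hPp.le) (by ring)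

lemma bfun_symm_uv (u v p q : ℝ) : bfun u v p q = bfun v u p q := by
  simp only [bfun]; ring_nf

lemma bfun_symm_pq (u v p q : ℝ) : bfun u v p q = bfun u v q p := by
  simp only [bfun]
  rw [mul_comm (u*v + u*p + v*p + 1) (u*v + u*q + v*q + 1)]
  ring_nf

noncomputable def SB (a x y z : ℝ) : ℝ := bfun a x y z + bfun a y x z + bfun a z x y

lemma SB_swap23 (a x y z : ℝ) : SB a x y z = SB a y x z := by
  unfold SB; rw [bfun_symm_pq a z x y]; ring

lemma SB_swap24 (a x y z : ℝ) : SB a x y z = SB a z y x := by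
  unfold SB
  rw [bfun_symm_pq a x y z, bfun_symm_pq a y x z, bfun_symm_pq a z x y]; ring

lemma clean_fst_pos (u v p q : ℝ) (hu0 : 0 < u) (hu1 : u < 1)
    (hv0 : 0 < v) (hv1 : v < 1) (hp0 : 0 < p) (hp1 : p < 1) (hq0 : 0 < q) (hq1 : q < 1) :
    0 < (2*((u*v + u*p + v*p + 1)*(u*v + u*q + v*q + 1))
          + (1 - v^2)*((u*v + u*p + v*p + 1) + (u*v + u*q + v*q + 1) - (p - q)^2))
        / (2*((u*v + u*p + v*p + 1)*(u*v + u*q + v*q + 1))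
            * √(4 - (u^2 + v^2 + p^2 + q^2) + 2*(u*v + u*p + u*q + v*p + v*q + p*q))) := by
  have hL1 : (0:ℝ) < u*v + u*p + v*p + 1 := by nlinarith
  have hL2 : (0:ℝ) < u*v + u*q + v*q + 1 := by nlinarith
  have hpq : (p - q)^2 < 1 := by nlinarith
  have hv2 : (0:ℝ) < 1 - v^2 := by nlinarith
  have hS : (0:ℝ) < (u*v + u*p + v*p + 1) + (u*v + u*q + v*q + 1) - (p - q)^2 := by
    nlinarith [mul_pos hu0 hv0, mul_pos hu0 hp0, mul_pos hv0 hp0,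
      mul_pos hu0 hq0, mul_pos hv0 hq0]
  apply div_pos (by nlinarith [mul_pos hL1 hL2, mul_pos hv2 hS])
    (mul_pos (by nlinarith [mul_pos hL1 hL2]) (Real.sqrt_pos.2 (by nlinarith)))

lemma SB_strictMono_fst (x y z : ℝ) (hx0 : 0 < x) (hx1 : x < 1) (hy0 : 0 < y) (hy1 : y < 1)
    (hz0 : 0 < z) (hz1 : z < 1) : StrictMonoOn (fun t => SB t x y z) (Set.Ioo 0 1) := by
  have key : ∀ a ∈ Set.Ioo (0:ℝ) 1, HasDerivAt (fun t => SB t x y z)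
      ((2*((a*x + a*y + x*y + 1)*(a*x + a*z + x*z + 1))
          + (1 - x^2)*((a*x + a*y + x*y + 1) + (a*x + a*z + x*z + 1) - (y - z)^2))
        / (2*((a*x + a*y + x*y + 1)*(a*x + a*z + x*z + 1))
            * √(4 - (a^2 + x^2 + y^2 + z^2) + 2*(a*x + a*y + a*z + x*y + x*z + y*z)))
      + (2*((a*y + a*x + y*x + 1)*(a*y + a*z + y*z + 1))
          + (1 - y^2)*((a*y + a*x + y*x + 1) + (a*y + a*z + y*z + 1) - (x - z)^2))
        / (2*((a*y + a*x + y*x + 1)*(a*y + a*z + y*z + 1))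
            * √(4 - (a^2 + y^2 + x^2 + z^2) + 2*(a*y + a*x + a*z + y*x + y*z + x*z)))
      + (2*((a*z + a*x + z*x + 1)*(a*z + a*y + z*y + 1))
          + (1 - z^2)*((a*z + a*x + z*x + 1) + (a*z + a*y + z*y + 1) - (x - y)^2))
        / (2*((a*z + a*x + z*x + 1)*(a*z + a*y + z*y + 1))
            * √(4 - (a^2 + z^2 + x^2 + y^2) + 2*(a*z + a*x + a*y + z*x + z*y + x*y)))) a := by
    intro a ha
    obtain ⟨ha0, ha1⟩ := ha
    exact ((bfun_deriv_fst a x y z ha0 ha1 hx0 hx1 hy0 hy1 hz0 hz1).add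
      (bfun_deriv_fst a y x z ha0 ha1 hy0 hy1 hx0 hx1 hz0 hz1)).add
      (bfun_deriv_fst a z x y ha0 ha1 hz0 hz1 hx0 hx1 hy0 hy1)
  apply strictMonoOn_of_deriv_pos (convex_Ioo 0 1)
  · intro t ht
    exact (key t ht).differentiableAt.continuousAt.continuousWithinAt
  · intro t ht
    rw [interior_Ioo] at ht
    rw [(key t ht).deriv]
    obtain ⟨ht0, ht1⟩ := ht
    exact add_pos (add_pos (clean_fst_pos t x y z ht0 ht1 hx0 hx1 hy0 hy1 hz0 hz1)
      (clean_fst_pos t y x z ht0 ht1 hy0 hy1 hx0 hx1 hz0 hz1))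
      (clean_fst_pos t z x y ht0 ht1 hz0 hz1 hx0 hx1 hy0 hy1)

lemma SB_strictMono_snd (a y z : ℝ) (ha0 : 0 < a) (ha1 : a < 1) (hy0 : 0 < y) (hy1 : y < 1)
    (hz0 : 0 < z) (hz1 : z < 1) : StrictMonoOn (fun x => SB a x y z) (Set.Ioo 0 1) := by
  have key : ∀ x ∈ Set.Ioo (0:ℝ) 1, HasDerivAt (fun x => SB a x y z)
      ((2*((x*a + x*y + a*y + 1)*(x*a + x*z + a*z + 1))
          + (1 - a^2)*((x*a + x*y + a*y + 1) + (x*a + x*z + a*z + 1) - (y - z)^2))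
        / (2*((x*a + x*y + a*y + 1)*(x*a + x*z + a*z + 1))
            * √(4 - (x^2 + a^2 + y^2 + z^2) + 2*(x*a + x*y + x*z + a*y + a*z + y*z)))
      + -((a + y)*(a + y + x - z))
        / (2*(a*y + a*x + y*x + 1)
            * √(4 - (a^2 + y^2 + x^2 + z^2) + 2*(a*y + a*x + a*z + y*x + y*z + x*z)))
      + -((a + z)*(a + z + x - y))
        / (2*(a*z + a*x + z*x + 1)
            * √(4 - (a^2 + z^2 + x^2 + y^2) + 2*(a*z + a*x + a*y + z*x + z*y + x*y)))) x := by
    intro x hx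
    obtain ⟨hx0, hx1⟩ := hx
    have h1 := (bfun_deriv_fst x a y z hx0 hx1 ha0 ha1 hy0 hy1 hz0 hz1).congr_of_eventuallyEq
      (Filter.Eventually.of_forall fun t => bfun_symm_uv a t y z)
    have h2 := bfun_deriv_thd a y x z ha0 ha1 hy0 hy1 hx0 hx1 hz0 hz1
    have h3 := bfun_deriv_thd a z x y ha0 ha1 hz0 hz1 hx0 hx1 hy0 hy1
    exact (h1.add h2).add h3
  apply strictMonoOn_of_deriv_pos (convex_Ioo 0 1)
  · intro t ht
    exact (key t ht).differentiableAt.continuousAt.continuousWithinAt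
  · intro x hx
    rw [interior_Ioo] at hx
    rw [(key x hx).deriv]
    obtain ⟨hx0, hx1⟩ := hx
    have hLy : (0:ℝ) < a*x + a*z + x*z + 1 := by nlinarith
    have hLz : (0:ℝ) < a*x + a*y + x*y + 1 := by nlinarith
    have hW : (0:ℝ) < 4 - (a^2 + x^2 + y^2 + z^2) + 2*(a*x + a*y + a*z + x*y + x*z + y*z) := by
      nlinarith
    have hsW : (0:ℝ) < √(4 - (a^2 + x^2 + y^2 + z^2) + 2*(a*x + a*y + a*z + x*y + x*z + y*z)) :=
      Real.sqrt_pos.2 hW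
    rw [show 4 - (x^2 + a^2 + y^2 + z^2) + 2*(x*a + x*y + x*z + a*y + a*z + y*z)
        = 4 - (a^2 + x^2 + y^2 + z^2) + 2*(a*x + a*y + a*z + x*y + x*z + y*z) from by ring,
      show 4 - (a^2 + y^2 + x^2 + z^2) + 2*(a*y + a*x + a*z + y*x + y*z + x*z)
        = 4 - (a^2 + x^2 + y^2 + z^2) + 2*(a*x + a*y + a*z + x*y + x*z + y*z) from by ring,
      show 4 - (a^2 + z^2 + x^2 + y^2) + 2*(a*z + a*x + a*y + z*x + z*y + x*y)
        = 4 - (a^2 + x^2 + y^2 + z^2) + 2*(a*x + a*y + a*z + x*y + x*z + y*z) from by ring]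
    have hiden : (2*((x*a + x*y + a*y + 1)*(x*a + x*z + a*z + 1))
          + (1 - a^2)*((x*a + x*y + a*y + 1) + (x*a + x*z + a*z + 1) - (y - z)^2))
        / (2*((x*a + x*y + a*y + 1)*(x*a + x*z + a*z + 1))
            * √(4 - (a^2 + x^2 + y^2 + z^2) + 2*(a*x + a*y + a*z + x*y + x*z + y*z)))
      + -((a + y)*(a + y + x - z))
        / (2*(a*y + a*x + y*x + 1)
            * √(4 - (a^2 + x^2 + y^2 + z^2) + 2*(a*x + a*y + a*z + x*y + x*z + y*z)))
      + -((a + z)*(a + z + x - y))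
        / (2*(a*z + a*x + z*x + 1)
            * √(4 - (a^2 + x^2 + y^2 + z^2) + 2*(a*x + a*y + a*z + x*y + x*z + y*z)))
      = (1 - a^2)*((a*x + a*y + x*y + 1) + (a*x + a*z + x*z + 1) - (y - z)^2)
        / (((a*x + a*y + x*y + 1)*(a*x + a*z + x*z + 1))
            * √(4 - (a^2 + x^2 + y^2 + z^2) + 2*(a*x + a*y + a*z + x*y + x*z + y*z))) := by
      rw [div_add_div _ _ (by positivity) (by positivity), div_add_div _ _ (by positivity)
        (by positivity), div_eq_div_iff (by positivity) (by positivity)]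
      ring
    rw [hiden]
    have hyz : (y - z)^2 < 1 := by nlinarith
    have hS : (0:ℝ) < (a*x + a*y + x*y + 1) + (a*x + a*z + x*z + 1) - (y - z)^2 := by
      nlinarith [mul_pos ha0 hx0, mul_pos ha0 hy0, mul_pos hx0 hy0,
        mul_pos ha0 hz0, mul_pos hx0 hz0]
    exact div_pos (by nlinarith [mul_pos (show (0:ℝ) < 1 - a^2 by nlinarith) hS])
      (mul_pos (mul_pos hLz hLy) hsW)

lemma th_pos {x : ℝ} (h : 0 < x) : 0 < tanh x := by
  rw [Real.tanh_eq_sinh_div_cosh]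
  exact div_pos (Real.sinh_pos_iff.2 h) (Real.cosh_pos _)

lemma th_lt_one (x : ℝ) : tanh x < 1 := by
  rw [Real.tanh_eq_sinh_div_cosh, div_lt_one (Real.cosh_pos _)]
  nlinarith [Real.cosh_sub_sinh x, Real.exp_pos (-x)]

lemma th_le {a b : ℝ} (h : a ≤ b) : tanh a ≤ tanh b := by
  rw [Real.tanh_eq_sinh_div_cosh, Real.tanh_eq_sinh_div_cosh,
    div_le_div_iff₀ (Real.cosh_pos _) (Real.cosh_pos _)]
  nlinarith [Real.sinh_sub b a, Real.sinh_nonneg_iff.2 (sub_nonneg.2 h)]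

lemma th_lt {a b : ℝ} (h : a < b) : tanh a < tanh b := by
  rw [Real.tanh_eq_sinh_div_cosh, Real.tanh_eq_sinh_div_cosh,
    div_lt_div_iff₀ (Real.cosh_pos _) (Real.cosh_pos _)]
  nlinarith [Real.sinh_sub b a, Real.sinh_pos_iff.2 (sub_pos.2 h)]

lemma bfun_corner (A T : ℝ) (hA0 : 0 < A) (hT0 : 0 < T) :
    bfun A T T T = arccos (1/2 + (1 - A^2)/(2*(1 + T^2 + 2*A*T))) := by
  unfold bfun
  rw [Real.sqrt_mul_self (by nlinarith : (0:ℝ) ≤ A*T + A*T + T*T + 1)]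
  congr 1
  have h : (0:ℝ) < 1 + T^2 + 2*A*T := by nlinarith
  field_simp
  ring

lemma SB_corner (A T : ℝ) (hA0 : 0 < A) (hT0 : 0 < T) :
    SB A T T T = 3 * arccos (1/2 + (1 - A^2)/(2*(1 + T^2 + 2*A*T))) := by
  unfold SB
  rw [bfun_corner A T hA0 hT0]
  ring

lemma SB_le_corner (a x y z A T : ℝ) (ha : a ∈ Set.Ioo (0:ℝ) 1) (hx : x ∈ Set.Ioo (0:ℝ) 1)
    (hy : y ∈ Set.Ioo (0:ℝ) 1) (hz : z ∈ Set.Ioo (0:ℝ) 1) (hA : A ∈ Set.Ioo (0:ℝ) 1)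
    (hT : T ∈ Set.Ioo (0:ℝ) 1) (haA : a ≤ A) (hxT : x ≤ T) (hyT : y ≤ T) (hzT : z ≤ T) :
    SB a x y z ≤ SB A T T T := by
  have s1 : SB a x y z ≤ SB a T y z :=
    ((SB_strictMono_snd a y z ha.1 ha.2 hy.1 hy.2 hz.1 hz.2).le_iff_le hx hT).2 hxT
  have s2 : SB a T y z ≤ SB a T T z := by
    calc SB a T y z = SB a y T z := SB_swap23 a T y z
      _ ≤ SB a T T z :=
        ((SB_strictMono_snd a T z ha.1 ha.2 hT.1 hT.2 hz.1 hz.2).le_iff_le hy hT).2 hyT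
  have s3 : SB a T T z ≤ SB a T T T := by
    calc SB a T T z = SB a z T T := SB_swap24 a T T z
      _ ≤ SB a T T T :=
        ((SB_strictMono_snd a T T ha.1 ha.2 hT.1 hT.2 hT.1 hT.2).le_iff_le hz hT).2 hzT
  have s4 : SB a T T T ≤ SB A T T T :=
    ((SB_strictMono_fst T T T hT.1 hT.2 hT.1 hT.2 hT.1 hT.2).le_iff_le ha hA).2 haA
  linarith

lemma SB_lt_corner (a x y z A T : ℝ) (ha : a ∈ Set.Ioo (0:ℝ) 1) (hx : x ∈ Set.Ioo (0:ℝ) 1)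
    (hy : y ∈ Set.Ioo (0:ℝ) 1) (hz : z ∈ Set.Ioo (0:ℝ) 1) (hA : A ∈ Set.Ioo (0:ℝ) 1)
    (hT : T ∈ Set.Ioo (0:ℝ) 1) (haA : a < A) (hxT : x ≤ T) (hyT : y ≤ T) (hzT : z ≤ T) :
    SB a x y z < SB A T T T := by
  have s1 := SB_le_corner a x y z a T ha hx hy hz ha hT le_rfl hxT hyT hzT
  have s4 : SB a T T T < SB A T T T :=
    SB_strictMono_fst T T T hT.1 hT.2 hT.1 hT.2 hT.1 hT.2 ha hA haA
  linarith


/-- Lemma 5.2 of the paper: if `0 < r_ν ≤ M` for all `ν`, then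
`Area(Δ_i) ≥ π − 3 arccos((1 + tanh² M)/(1 + 3 tanh² M)) > 0`; moreover for any
`c ∈ (0, M)`, if in addition `r_i < c`, then
`Area(Δ_i) > π − 3 arccos(1/2 + (1 − tanh² c)/(2(1 + tanh² M + 2 tanh c tanh M)))`. -/
theorem area_lower_bound (M ri rj rk rh : ℝ) (hM : 0 < M)
    (hri : 0 < ri) (hrj : 0 < rj) (hrk : 0 < rk) (hrh : 0 < rh)
    (hriM : ri ≤ M) (hrjM : rj ≤ M) (hrkM : rk ≤ M) (hrhM : rh ≤ M) :
    (π - 3 * arccos ((1 + tanh M ^ 2) / (1 + 3 * tanh M ^ 2)) ≤ areaDelta ri rj rk rh ∧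
      0 < π - 3 * arccos ((1 + tanh M ^ 2) / (1 + 3 * tanh M ^ 2))) ∧
    ∀ c ∈ Set.Ioo (0 : ℝ) M, ri < c →
      π - 3 * arccos (1 / 2 +
          (1 - tanh c ^ 2) / (2 * (1 + tanh M ^ 2 + 2 * tanh c * tanh M))) <
        areaDelta ri rj rk rh := by
  have hT : tanh M ∈ Set.Ioo (0:ℝ) 1 := ⟨th_pos hM, th_lt_one M⟩
  have hta : tanh ri ∈ Set.Ioo (0:ℝ) 1 := ⟨th_pos hri, th_lt_one ri⟩
  have htb : tanh rj ∈ Set.Ioo (0:ℝ) 1 := ⟨th_pos hrj, th_lt_one rj⟩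
  have htc : tanh rk ∈ Set.Ioo (0:ℝ) 1 := ⟨th_pos hrk, th_lt_one rk⟩
  have htd : tanh rh ∈ Set.Ioo (0:ℝ) 1 := ⟨th_pos hrh, th_lt_one rh⟩
  have harea : areaDelta ri rj rk rh
      = π - SB (tanh ri) (tanh rj) (tanh rk) (tanh rh) := by
    unfold areaDelta SB bfun; ring
  have hposbound : 0 < π - 3 * arccos ((1 + tanh M ^ 2) / (1 + 3 * tanh M ^ 2)) := by
    have hb1 : (1:ℝ)/2 < (1 + tanh M ^ 2) / (1 + 3 * tanh M ^ 2) := by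
      rw [lt_div_iff₀ (by positivity)]
      nlinarith [hT.1, hT.2]
    have hb2 : (1 + tanh M ^ 2) / (1 + 3 * tanh M ^ 2) ≤ 1 := by
      rw [div_le_one (by positivity)]
      nlinarith [hT.1]
    have h3 : arccos ((1 + tanh M ^ 2) / (1 + 3 * tanh M ^ 2)) < arccos (1/2) :=
      Real.strictAntiOn_arccos ⟨by norm_num, by norm_num⟩ ⟨by linarith, hb2⟩ hb1
    have h4 : arccos (1/2 : ℝ) = π/3 := by
      rw [Real.arccos_eq_of_eq_cos (by positivity) (by linarith [Real.pi_pos])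
        (Real.cos_pi_div_three).symm]
    linarith
  constructor
  · constructor
    · have hchain := SB_le_corner (tanh ri) (tanh rj) (tanh rk) (tanh rh) (tanh M) (tanh M)
        hta htb htc htd hT hT (th_le hriM) (th_le hrjM) (th_le hrkM) (th_le hrhM)
      have hcor : SB (tanh M) (tanh M) (tanh M) (tanh M)
          = 3 * arccos ((1 + tanh M ^ 2) / (1 + 3 * tanh M ^ 2)) := by
        rw [SB_corner (tanh M) (tanh M) hT.1 hT.1]
        congr 2
        have h1 : (0:ℝ) < 1 + tanh M ^ 2 + 2 * tanh M * tanh M := by nlinarith [hT.1]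
        have h2 : (0:ℝ) < 1 + 3 * tanh M ^ 2 := by positivity
        field_simp
        ring
      rw [harea]
      linarith
    · exact hposbound
  · intro c hc hric
    obtain ⟨hc0, hcM⟩ := hc
    have hAc : tanh c ∈ Set.Ioo (0:ℝ) 1 := ⟨th_pos hc0, th_lt_one c⟩
    have hchain := SB_lt_corner (tanh ri) (tanh rj) (tanh rk) (tanh rh) (tanh c) (tanh M)
      hta htb htc htd hAc hT (th_lt hric) (th_le hrjM) (th_le hrkM) (th_le hrhM)
    have hcor := SB_corner (tanh c) (tanh M) hAc.1 hT.1
    rw [harea]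
    have harg : (1:ℝ)/2 + (1 - tanh c ^ 2)/(2*(1 + tanh M ^ 2 + 2 * tanh c * tanh M))
        = 1 / 2 + (1 - tanh c ^ 2) / (2 * (1 + tanh M ^ 2 + 2 * tanh c * tanh M)) := rfl
    rw [hcor] at hchain
    linarith
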